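/- arXiv:2111.00034 — 2 statements merged into one kernel-verified Lean document; each statement's English description precedes it below -/
import Mathlib

section
/- Let X ∈ ℝ^{D×P} with XᵀX invertible, let y ∈ ℝ^P be nonzero, let β* := X (XᵀX)^{−1} y, and let β := β*/‖β*‖₂. Then for every A ≥ 0, the unique minimizer of the quadratic form β̂ ↦ β̂ᵀ (A β βᵀ + I)^{−1} β̂ over the affine space { β̂ ∈ ℝ^D : Xᵀ β̂ = y } is β̂ = β*. In particular, the kernel regression solutions with the kernels K_A(x,x') = xᵀ(A ββᵀ + I)x' coincide for all A ≥ 0 and equal the minimum ℓ₂-norm interpolator. -/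
open Matrix

/-- The Euclidean (ℓ²) norm of a vector in `ℝ^D`. -/
noncomputable def euclNorm {D : ℕ} (v : Fin D → ℝ) : ℝ :=
  Real.sqrt (∑ i, v i ^ 2)

lemma vecMulVec_mulVec' {D : ℕ} (u v w : Fin D → ℝ) :
    vecMulVec u v *ᵥ w = (v ⬝ᵥ w) • u := by
  ext i
  simp [vecMulVec_apply, mulVec, dotProduct, Finset.mul_sum, mul_comm, mul_left_comm]

/-- Let `X ∈ ℝ^{D×P}` with `XᵀX` invertible, `y ≠ 0`,
`β* = X(XᵀX)⁻¹ y` and `β = β*/‖β*‖`. Then `β*` interpolates (`Xᵀ β* = y`) and for every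
`A ≥ 0`, `β*` is the unique minimizer of `β̂ ↦ β̂ᵀ (A β βᵀ + I)⁻¹ β̂` over
`{β̂ : Xᵀ β̂ = y}`; i.e. the kernel regression solutions with kernels
`K_A(x,x') = xᵀ(Aββᵀ + I)x'` coincide for all `A ≥ 0` with the minimum-ℓ₂-norm
interpolator. -/
theorem stmt16 {D P : ℕ} (X : Matrix (Fin D) (Fin P) ℝ)
    (hX : IsUnit (Xᵀ * X).det)
    (y : Fin P → ℝ) (hy : y ≠ 0)
    (βstar β : Fin D → ℝ)
    (hβstar : βstar = X *ᵥ ((Xᵀ * X)⁻¹ *ᵥ y))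
    (hβ : β = (euclNorm βstar)⁻¹ • βstar) :
    Xᵀ *ᵥ βstar = y ∧
    ∀ A : ℝ, 0 ≤ A → ∀ b : Fin D → ℝ, Xᵀ *ᵥ b = y → b ≠ βstar →
      βstar ⬝ᵥ ((A • vecMulVec β β + 1 : Matrix (Fin D) (Fin D) ℝ)⁻¹ *ᵥ βstar) <
        b ⬝ᵥ ((A • vecMulVec β β + 1 : Matrix (Fin D) (Fin D) ℝ)⁻¹ *ᵥ b) := by
  have hinterp : Xᵀ *ᵥ βstar = y := by
    rw [hβstar, mulVec_mulVec, mulVec_mulVec,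
      Matrix.mul_nonsing_inv _ hX, Matrix.one_mulVec]
  refine ⟨hinterp, ?_⟩
  -- βstar ≠ 0
  have hβs0 : βstar ≠ 0 := by
    intro h
    apply hy
    rw [← hinterp, h, mulVec_zero]
  -- the norm
  set s := euclNorm βstar with hs
  have hsum_nonneg : (0:ℝ) ≤ ∑ i, βstar i ^ 2 :=
    Finset.sum_nonneg fun i _ => sq_nonneg _
  have hsq : s ^ 2 = ∑ i, βstar i ^ 2 := Real.sq_sqrt hsum_nonneg
  have hsum_pos : (0:ℝ) < ∑ i, βstar i ^ 2 := by
    rcases (hsum_nonneg.lt_or_eq) with h | h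
    · exact h
    · exfalso; apply hβs0; ext i
      have := (Finset.sum_eq_zero_iff_of_nonneg (fun i _ => sq_nonneg (βstar i))).1 h.symm
      have := this i (Finset.mem_univ i)
      simpa [pow_eq_zero_iff] using this
  have hspos : 0 < s := Real.sqrt_pos.2 hsum_pos
  have hsne : s ≠ 0 := ne_of_gt hspos
  have hdot_ss : βstar ⬝ᵥ βstar = s ^ 2 := by
    rw [hsq]; simp [dotProduct, pow_two]
  have hββ : β ⬝ᵥ β = 1 := by
    rw [hβ]
    simp only [dotProduct_smul, smul_dotProduct, smul_eq_mul]
    rw [hdot_ss]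
    field_simp
  have hβ_βstar : β ⬝ᵥ βstar = s := by
    rw [hβ]
    simp only [smul_dotProduct, smul_eq_mul]
    rw [hdot_ss]
    field_simp
  intro A hA b hb hne
  have h1A : (0:ℝ) < 1 + A := by linarith
  set c : ℝ := A / (1 + A) with hc
  set W : Matrix (Fin D) (Fin D) ℝ := vecMulVec β β with hW
  set M : Matrix (Fin D) (Fin D) ℝ := A • W + 1 with hM
  set N : Matrix (Fin D) (Fin D) ℝ := 1 - c • W with hN
  -- W * W = W
  have hWW : W * W = W := by
    ext i j
    simp only [hW, Matrix.mul_apply, vecMulVec_apply]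
    have : ∑ k, β i * β k * (β k * β j) = (β i * β j) * ∑ k, β k * β k := by
      rw [Finset.mul_sum]; apply Finset.sum_congr rfl; intros; ring
    rw [this]
    have : (∑ k, β k * β k) = 1 := hββ
    rw [this, mul_one]
  have hMN : M * N = 1 := by
    rw [hM, hN]
    rw [Matrix.mul_sub, Matrix.add_mul, Matrix.add_mul]
    simp only [Matrix.mul_one, Matrix.one_mul, Matrix.smul_mul, Matrix.mul_smul, hWW,
      smul_smul]
    have h2 : (c * A) • W + c • W = A • W := by
      rw [← add_smul]
      congr 1
      rw [hc]; field_simp; ring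
    rw [h2]; abel
  have hMinv : M⁻¹ = N := inv_eq_right_inv hMN
  rw [hMinv]
  -- quadratic form with N
  have hNv : ∀ v : Fin D → ℝ, N *ᵥ v = v - (c * (β ⬝ᵥ v)) • β := by
    intro v
    rw [hN, Matrix.sub_mulVec, Matrix.one_mulVec, Matrix.smul_mulVec, hW,
      vecMulVec_mulVec', smul_smul]
  -- orthogonality: βstar ⬝ (b - βstar) = 0
  set d : Fin D → ℝ := b - βstar with hd
  have hXd : Xᵀ *ᵥ d = 0 := by
    rw [hd, Matrix.mulVec_sub, hb, hinterp, sub_self]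
  have hdX : d ᵥ* X = 0 := by
    rw [← Matrix.mulVec_transpose, hXd]
  have hbs_d : βstar ⬝ᵥ d = 0 := by
    rw [dotProduct_comm, hβstar, mulVec_mulVec, Matrix.dotProduct_mulVec,
      ← Matrix.vecMul_vecMul, hdX]
    simp
  have hβ_d : β ⬝ᵥ d = 0 := by
    rw [hβ, smul_dotProduct, hbs_d, smul_zero]
  have hdd : 0 < d ⬝ᵥ d := by
    have hd0 : d ≠ 0 := by
      intro h; apply hne; rw [hd] at h
      have := sub_eq_zero.1 h; exact this
    have : d ⬝ᵥ d = ∑ i, d i ^ 2 := by simp [dotProduct, pow_two]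
    rw [this]
    apply Finset.sum_pos'
    · intro i _; exact sq_nonneg _
    · obtain ⟨i, hi⟩ := Function.ne_iff.1 hd0
      refine ⟨i, Finset.mem_univ i, ?_⟩
      have hdi : d i ≠ 0 := by simpa using hi
      positivity
  have hb_eq : b = βstar + d := by rw [hd]; abel
  -- compute both sides
  have hβ_b : β ⬝ᵥ b = s := by
    rw [hb_eq, dotProduct_add, hβ_βstar, hβ_d, add_zero]
  have lhs_eq : βstar ⬝ᵥ (N *ᵥ βstar) = s ^ 2 - c * s * s := by
    rw [hNv, dotProduct_sub, hdot_ss, dotProduct_smul, hβ_βstar, smul_eq_mul]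
    have : βstar ⬝ᵥ β = s := by rw [dotProduct_comm]; exact hβ_βstar
    rw [this]; try ring
  have rhs_eq : b ⬝ᵥ (N *ᵥ b) = s ^ 2 - c * s * s + d ⬝ᵥ d := by
    rw [hNv, dotProduct_sub, dotProduct_smul, hβ_b, smul_eq_mul]
    have hbb : b ⬝ᵥ b = s ^ 2 + d ⬝ᵥ d := by
      rw [hb_eq, dotProduct_add, add_dotProduct, add_dotProduct, hdot_ss,
        dotProduct_comm d βstar, hbs_d]
      ring
    have hbβ : b ⬝ᵥ β = s := by rw [dotProduct_comm]; exact hβ_b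
    rw [hbb, hbβ]; ring
  rw [lhs_eq, rhs_eq]
  linarith
end

section
/- Let a ∈ ℝ^N be nonzero, W ∈ ℝ^{N×D}, s > 0 and β ∈ ℝ^D a unit vector. If W Wᵀ = a aᵀ and Wᵀ a = s β, then ‖a‖₂² = s and W = a βᵀ. -/
open Matrix

/-- If `a ∈ ℝ^N` is nonzero, `W ∈ ℝ^{N×D}`, `s > 0`, `β` is a unit vector,
`W Wᵀ = a aᵀ` and `Wᵀ a = s β`, then `‖a‖² = s` and `W = a βᵀ`. -/
theorem stmt17 {N D : ℕ} (a : Fin N → ℝ) (ha : a ≠ 0)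
    (W : Matrix (Fin N) (Fin D) ℝ)
    (s : ℝ) (hs : 0 < s)
    (β : Fin D → ℝ) (hβ : euclNorm β = 1)
    (hbal : W * Wᵀ = vecMulVec a a)
    (hopt : Wᵀ *ᵥ a = s • β) :
    euclNorm a ^ 2 = s ∧ W = vecMulVec a β := by
  -- unit norm of β
  have hβn : ∑ j, β j ^ 2 = 1 := by
    have h0 : (0:ℝ) ≤ ∑ j, β j ^ 2 := Finset.sum_nonneg fun j _ => sq_nonneg _
    have := congrArg (fun x => x ^ 2) hβ
    simpa [euclNorm, Real.sq_sqrt h0] using this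
  -- balance condition entrywise
  have h1 : ∀ i k, ∑ j, W i j * W k j = a i * a k := by
    intro i k
    have := congrFun (congrFun hbal i) k
    simpa [Matrix.mul_apply, Matrix.transpose_apply, Matrix.vecMulVec_apply] using this
  -- optimality condition entrywise
  have h2 : ∀ j, ∑ i, W i j * a i = s * β j := by
    intro j
    have := congrFun hopt j
    simpa [Matrix.mulVec, dotProduct, Matrix.transpose_apply] using this
  set Sa := ∑ i, a i * a i with hSa
  have hSa0 : 0 < Sa := by
    rcases Function.ne_iff.mp ha with ⟨i, hi⟩
    have : (0:ℝ) < a i * a i := mul_self_pos.mpr hi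
    exact lt_of_lt_of_le this (Finset.single_le_sum (f := fun i => a i * a i)
      (fun k _ => mul_self_nonneg _) (Finset.mem_univ i))
  -- s² = Sa²
  have hkey : s ^ 2 = Sa ^ 2 := by
    have lhs : ∑ j, (∑ i, W i j * a i) ^ 2 = s ^ 2 := by
      calc ∑ j, (∑ i, W i j * a i) ^ 2 = ∑ j, (s * β j) ^ 2 := by
            refine Finset.sum_congr rfl fun j _ => by rw [h2 j]
        _ = s ^ 2 * ∑ j, β j ^ 2 := by rw [Finset.mul_sum]; ring_nf
        _ = s ^ 2 := by rw [hβn, mul_one]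
    have rhs : ∑ j, (∑ i, W i j * a i) ^ 2 = Sa ^ 2 := by
      have exp : ∀ j : Fin D, (∑ i, W i j * a i) ^ 2
          = ∑ i, ∑ k, (W i j * W k j) * (a i * a k) := by
        intro j
        rw [sq, Finset.sum_mul_sum]
        exact Finset.sum_congr rfl fun i _ => Finset.sum_congr rfl fun k _ => by ring
      calc ∑ j, (∑ i, W i j * a i) ^ 2
          = ∑ j, ∑ i, ∑ k, (W i j * W k j) * (a i * a k) := Finset.sum_congr rfl fun j _ => exp j
        _ = ∑ i, ∑ k, ∑ j, (W i j * W k j) * (a i * a k) := by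
            rw [Finset.sum_comm]
            exact Finset.sum_congr rfl fun i _ => Finset.sum_comm
        _ = ∑ i, ∑ k, (a i * a k) * (a i * a k) := by
            refine Finset.sum_congr rfl fun i _ => Finset.sum_congr rfl fun k _ => ?_
            rw [← Finset.sum_mul, h1 i k]
        _ = Sa ^ 2 := by
            rw [hSa, sq, Finset.sum_mul_sum]
            exact Finset.sum_congr rfl fun i _ => Finset.sum_congr rfl fun k _ => by ring
    rw [← lhs, rhs]
  have hSas : Sa = s := by nlinarith
  have hnorm : euclNorm a ^ 2 = s := by
    have h0 : (0:ℝ) ≤ ∑ i, a i ^ 2 := Finset.sum_nonneg fun i _ => sq_nonneg _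
    have : ∑ i, a i ^ 2 = Sa := Finset.sum_congr rfl fun i _ => sq (a i) ▸ by ring
    rw [euclNorm, Real.sq_sqrt h0, this, hSas]
  refine ⟨hnorm, ?_⟩
  -- Frobenius norm of W - a βᵀ is zero
  have cross : ∑ i, ∑ j, W i j * (a i * β j) = s := by
    calc ∑ i, ∑ j, W i j * (a i * β j)
        = ∑ j, ∑ i, (W i j * a i) * β j := by
          rw [Finset.sum_comm]
          exact Finset.sum_congr rfl fun j _ => Finset.sum_congr rfl fun i _ => by ring
      _ = ∑ j, (s * β j) * β j := by
          refine Finset.sum_congr rfl fun j _ => ?_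
          rw [← Finset.sum_mul, h2 j]
      _ = s * ∑ j, β j ^ 2 := by rw [Finset.mul_sum]; exact Finset.sum_congr rfl fun j _ => by ring
      _ = s := by rw [hβn, mul_one]
  have diag : ∑ i, ∑ j, W i j * W i j = s := by
    calc ∑ i, ∑ j, W i j * W i j = ∑ i, a i * a i :=
          Finset.sum_congr rfl fun i _ => h1 i i
      _ = s := hSas
  have last : ∑ i, ∑ j, (a i * β j) * (a i * β j) = s := by
    calc ∑ i, ∑ j, (a i * β j) * (a i * β j)
        = ∑ i, (a i * a i) * ∑ j, β j ^ 2 := by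
          refine Finset.sum_congr rfl fun i _ => ?_
          rw [Finset.mul_sum]
          exact Finset.sum_congr rfl fun j _ => by ring
      _ = ∑ i, a i * a i := by rw [hβn]; simp
      _ = s := hSas
  have hzero : ∑ i, ∑ j, (W i j - a i * β j) ^ 2 = 0 := by
    have exp : ∀ i j, (W i j - a i * β j) ^ 2
        = W i j * W i j - 2 * (W i j * (a i * β j)) + (a i * β j) * (a i * β j) := by
      intros; ring
    calc ∑ i, ∑ j, (W i j - a i * β j) ^ 2
        = (∑ i, ∑ j, W i j * W i j) - 2 * (∑ i, ∑ j, W i j * (a i * β j))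
            + ∑ i, ∑ j, (a i * β j) * (a i * β j) := by
          simp only [exp, Finset.sum_add_distrib, Finset.sum_sub_distrib, Finset.mul_sum]
      _ = s - 2 * s + s := by rw [cross, diag, last]
      _ = 0 := by ring
  ext i j
  have h3 : ∀ i ∈ Finset.univ, (0:ℝ) ≤ ∑ j, (W i j - a i * β j) ^ 2 :=
    fun i _ => Finset.sum_nonneg fun j _ => sq_nonneg _
  have h4 := (Finset.sum_eq_zero_iff_of_nonneg h3).mp hzero i (Finset.mem_univ i)
  have h5 := (Finset.sum_eq_zero_iff_of_nonneg
    (fun j _ => sq_nonneg (W i j - a i * β j))).mp h4 j (Finset.mem_univ j)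
  have : W i j - a i * β j = 0 := by
    exact pow_eq_zero_iff (n := 2) (by norm_num) |>.mp h5
  simpa [Matrix.vecMulVec_apply, sub_eq_zero] using this
end
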